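/- Let n ≥ 1 be an integer, t_n = sin(π/(2n)), μ_n = 1 - t_n⁴, G = μ_n · P(π/(2n)) and H = μ_n · R(π/(2n)), where P(φ) = [[1, -tan φ],[0,0]] and R(φ) is rotation by 2φ. Then for any sequence A : ℕ → Matrix (Fin 2) (Fin 2) ℝ with A(k) ∈ {G, H} for all k, and all k ≥ 1, the operator norm ‖A(k) A(k-1) ⋯ A(1)‖ ≤ μ_n^k · ‖P(π/(2n))‖. In particular the products converge to zero exponentially. -/

import Mathlib

/-!
`R φ` is the rotation by `2φ`, so `R φ ^ b = R (bφ)`, and `P φ` is an idempotent with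
`P φ * R ψ * P φ = (cos 2ψ - tan φ sin 2ψ) • P φ`. Hence every product of factors `P φ` and
`R φ` is either a rotation `R (bφ)` or of the form `R (bφ) * P φ * X`, provided that the scalars
`cos 2bφ - tan φ sin 2bφ = cos ((2b+1)φ) / cos φ` can be absorbed into a contraction `X`. For
`φ = π/(2n)` they can: an odd multiple of `π/(2n)` lies at distance at least `φ` from every
multiple of `π`, so `|cos ((2b+1)φ)| ≤ cos φ`. Both shapes have norm at most `‖P φ‖`, and the
factors `μ` contribute `μ ^ k`.
-/

open Real Matrix

noncomputable def P (φ : ℝ) : Matrix (Fin 2) (Fin 2) ℝ := !![1, -Real.tan φ; 0, 0]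

noncomputable def R (φ : ℝ) : Matrix (Fin 2) (Fin 2) ℝ :=
  !![Real.cos (2*φ), -Real.sin (2*φ); Real.sin (2*φ), Real.cos (2*φ)]

noncomputable def opNorm (A : Matrix (Fin 2) (Fin 2) ℝ) : ℝ :=
  ‖Matrix.toEuclideanCLM (𝕜 := ℝ) A‖

/-- `prods A k = A k * A (k-1) * ⋯ * A 1` (with `prods A 0 = 1`). -/
noncomputable def prods (A : ℕ → Matrix (Fin 2) (Fin 2) ℝ) : ℕ → Matrix (Fin 2) (Fin 2) ℝ
  | 0 => 1
  | k + 1 => A (k + 1) * prods A k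

lemma P_mul_P (φ : ℝ) : P φ * P φ = P φ := by
  ext i j
  fin_cases i <;> fin_cases j <;> simp [P, Matrix.mul_apply]

lemma P_mul_R_mul_P (φ ψ : ℝ) :
    P φ * R ψ * P φ = (cos (2 * ψ) - tan φ * sin (2 * ψ)) • P φ := by
  ext i j
  fin_cases i <;> fin_cases j <;> simp [P, R, Matrix.mul_apply, -mul_eq_mul_right_iff] <;> ring

lemma R_zero : R 0 = 1 := by
  ext i j
  fin_cases i <;> fin_cases j <;> simp [R]

lemma R_mul_R (φ ψ : ℝ) : R φ * R ψ = R (φ + ψ) := by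
  ext i j
  fin_cases i <;> fin_cases j <;>
    simp [R, Matrix.mul_apply, mul_add, cos_add, sin_add] <;> ring

lemma R_mem_unitary (φ : ℝ) : R φ ∈ unitary (Matrix (Fin 2) (Fin 2) ℝ) := by
  have h := sin_sq_add_cos_sq (2 * φ)
  rw [Unitary.mem_iff]
  constructor <;>
  · ext i j
    fin_cases i <;> fin_cases j <;>
      simp [R, Matrix.mul_apply, Matrix.star_eq_conjTranspose] <;> linarith

lemma opNorm_mul_le (A B : Matrix (Fin 2) (Fin 2) ℝ) :
    opNorm (A * B) ≤ opNorm A * opNorm B := by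
  rw [opNorm, map_mul]
  exact norm_mul_le _ _

lemma opNorm_smul (c : ℝ) (A : Matrix (Fin 2) (Fin 2) ℝ) :
    opNorm (c • A) = |c| * opNorm A := by
  rw [opNorm, map_smul, norm_smul, Real.norm_eq_abs, opNorm]

lemma opNorm_R (φ : ℝ) : opNorm (R φ) = 1 :=
  CStarRing.norm_of_mem_unitary (Unitary.map_mem _ (R_mem_unitary φ))

lemma one_le_opNorm_P (φ : ℝ) : 1 ≤ opNorm (P φ) := by
  have hne : toEuclideanCLM (𝕜 := ℝ) (P φ) ≠ 0 := by
    rw [EmbeddingLike.map_ne_zero_iff]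
    intro h
    simpa [P] using congrFun (congrFun h 0) 0
  have hidem : opNorm (P φ) ≤ opNorm (P φ) * opNorm (P φ) := by
    conv_lhs => rw [← P_mul_P φ]
    exact opNorm_mul_le _ _
  have hpos : 0 < opNorm (P φ) := norm_pos_iff.mpr hne
  nlinarith

lemma abs_cos_le_cos_of_mem_Icc {φ x : ℝ} (hφ : 0 ≤ φ) (hφx : φ ≤ x) (hxφ : x ≤ π - φ) :
    |cos x| ≤ cos φ := by
  refine abs_le.mpr ⟨?_, cos_le_cos_of_nonneg_of_le_pi hφ (by linarith) hφx⟩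
  rw [neg_le, ← cos_pi_sub]
  exact cos_le_cos_of_nonneg_of_le_pi hφ (by linarith) (by linarith)

/-- Reducing `b` modulo `n` moves `(2b + 1)π/(2n)` by a multiple of `π` into `[φ, π - φ]`. -/
lemma abs_cos_odd_mul_le {n : ℕ} (hn : 1 ≤ n) (b : ℕ) :
    |cos ((2 * b + 1) * (π / (2 * n)))| ≤ cos (π / (2 * n)) := by
  set φ := π / (2 * n)
  have hn0 : (0 : ℝ) < n := by exact_mod_cast hn
  have hφ : 0 ≤ φ := by positivity
  have hπ : π = 2 * n * φ := by simp only [φ]; field_simp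
  have hb : (b : ℝ) = n * (b / n : ℕ) + (b % n : ℕ) := by
    exact_mod_cast (Nat.div_add_mod b n).symm
  have hr : ((b % n : ℕ) : ℝ) + 1 ≤ n := by exact_mod_cast Nat.mod_lt b hn
  have hsplit : (2 * b + 1) * φ = (2 * (b % n : ℕ) + 1) * φ + (b / n : ℕ) * π := by
    rw [hb, hπ]; ring
  rw [hsplit, cos_add_nat_mul_pi, abs_mul, abs_neg_one_pow, one_mul]
  apply abs_cos_le_cos_of_mem_Icc hφ <;> nlinarith

/-- For `n = 1` the angle is `π / 2`, where Mathlib's `tan` takes the junk value `0`. -/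
lemma abs_cos_sub_tan_mul_sin_le_one {n : ℕ} (hn : 1 ≤ n) (b : ℕ) :
    |cos (2 * (b * (π / (2 * n)))) - tan (π / (2 * n)) * sin (2 * (b * (π / (2 * n))))| ≤ 1 := by
  rcases hn.eq_or_lt with rfl | hn2
  · simpa using abs_cos_le_one _
  set φ := π / (2 * n)
  have hn2' : (1 : ℝ) < n := by exact_mod_cast hn2
  have hφ : 0 < φ := by positivity
  have hφ2 : φ < π / 2 := by
    rw [div_lt_div_iff₀ (by positivity) two_pos]
    nlinarith [pi_pos]
  have hcos : 0 < cos φ := cos_pos_of_mem_Ioo ⟨by linarith, hφ2⟩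
  have heq : cos (2 * (b * φ)) - tan φ * sin (2 * (b * φ)) = cos ((2 * b + 1) * φ) / cos φ := by
    rw [tan_eq_sin_div_cos, show (2 * b + 1) * φ = 2 * (b * φ) + φ by ring, cos_add]
    field_simp
  rw [heq, abs_div, abs_of_pos hcos, div_le_one hcos]
  exact abs_cos_odd_mul_le hn b

def IsPRWord (φ : ℝ) (M : Matrix (Fin 2) (Fin 2) ℝ) : Prop :=
  (∃ b : ℕ, M = R (b * φ)) ∨
    ∃ (b : ℕ) (X : Matrix (Fin 2) (Fin 2) ℝ), opNorm X ≤ 1 ∧ M = R (b * φ) * P φ * X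

namespace IsPRWord

variable {φ : ℝ} {M : Matrix (Fin 2) (Fin 2) ℝ}

lemma one : IsPRWord φ 1 :=
  .inl ⟨0, by rw [Nat.cast_zero, zero_mul, R_zero]⟩

lemma R_mul (h : IsPRWord φ M) : IsPRWord φ (R φ * M) := by
  have hshift (b : ℕ) : R φ * R (b * φ) = R ((b + 1 : ℕ) * φ) := by
    rw [R_mul_R]; push_cast; ring_nf
  rcases h with ⟨b, rfl⟩ | ⟨b, X, hX, rfl⟩
  · exact .inl ⟨b + 1, hshift b⟩
  · exact .inr ⟨b + 1, X, hX, by simp only [← mul_assoc, hshift]⟩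

lemma opNorm_le (h : IsPRWord φ M) : opNorm M ≤ opNorm (P φ) := by
  rcases h with ⟨b, rfl⟩ | ⟨b, X, hX, rfl⟩
  · exact (opNorm_R _).trans_le (one_le_opNorm_P φ)
  · calc opNorm (R (b * φ) * P φ * X)
        ≤ opNorm (R (b * φ)) * opNorm (P φ) * opNorm X :=
          (opNorm_mul_le _ _).trans
            (mul_le_mul_of_nonneg_right (opNorm_mul_le _ _) (norm_nonneg _))
      _ ≤ opNorm (P φ) := by
          rw [opNorm_R, one_mul]
          exact mul_le_of_le_one_right (norm_nonneg _) hX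

end IsPRWord

lemma IsPRWord.P_mul {n : ℕ} (hn : 1 ≤ n) {M : Matrix (Fin 2) (Fin 2) ℝ}
    (h : IsPRWord (π / (2 * n)) M) : IsPRWord (π / (2 * n)) (P (π / (2 * n)) * M) := by
  set φ := π / (2 * n)
  have hR0 : R ((0 : ℕ) * φ) = 1 := by rw [Nat.cast_zero, zero_mul, R_zero]
  rcases h with ⟨b, rfl⟩ | ⟨b, X, hX, rfl⟩
  · exact .inr ⟨0, R (b * φ), (opNorm_R _).le, by rw [hR0, one_mul]⟩
  · set c := cos (2 * (b * φ)) - tan φ * sin (2 * (b * φ))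
    refine .inr ⟨0, c • X, ?_, ?_⟩
    · rw [opNorm_smul]
      exact mul_le_one₀ (abs_cos_sub_tan_mul_sin_le_one hn b) (norm_nonneg _) hX
    · rw [hR0, one_mul, mul_smul_comm, ← smul_mul_assoc, ← P_mul_R_mul_P, mul_assoc, mul_assoc,
        mul_assoc]

lemma exists_prods_eq_pow_smul (S : Matrix (Fin 2) (Fin 2) ℝ → Prop) (hS : S 1) (μ : ℝ)
    (A : ℕ → Matrix (Fin 2) (Fin 2) ℝ)
    (hA : ∀ k, ∃ B, A k = μ • B ∧ ∀ M, S M → S (B * M)) (k : ℕ) :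
    ∃ M, S M ∧ prods A k = μ ^ k • M := by
  induction k with
  | zero => exact ⟨1, hS, by rw [pow_zero, one_smul]; rfl⟩
  | succ k ih =>
    obtain ⟨M, hM, hprod⟩ := ih
    obtain ⟨B, hB, hBS⟩ := hA (k + 1)
    refine ⟨B * M, hBS M hM, ?_⟩
    rw [prods, hprod, hB, smul_mul_smul_comm, pow_succ']

lemma opNorm_prods_le {n : ℕ} (hn : 1 ≤ n) {μ : ℝ} (hμ : 0 ≤ μ)
    (A : ℕ → Matrix (Fin 2) (Fin 2) ℝ)
    (hA : ∀ k, A k = μ • P (π / (2 * n)) ∨ A k = μ • R (π / (2 * n))) (k : ℕ) :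
    opNorm (prods A k) ≤ μ ^ k * opNorm (P (π / (2 * n))) := by
  have hfactor (k : ℕ) : ∃ B, A k = μ • B ∧ ∀ M, IsPRWord (π / (2 * n)) M →
      IsPRWord (π / (2 * n)) (B * M) := by
    rcases hA k with hP | hR
    · exact ⟨_, hP, fun M hM => hM.P_mul hn⟩
    · exact ⟨_, hR, fun M hM => hM.R_mul⟩
  obtain ⟨M, hM, hprod⟩ := exists_prods_eq_pow_smul _ IsPRWord.one μ A hfactor k
  rw [hprod, opNorm_smul, abs_pow, abs_of_nonneg hμ]
  exact mul_le_mul_of_nonneg_left hM.opNorm_le (by positivity)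

lemma one_sub_sin_pow_four_mem_Ico {n : ℕ} (hn : 1 ≤ n) :
    1 - sin (π / (2 * n)) ^ 4 ∈ Set.Ico 0 1 := by
  have hn1 : (1 : ℝ) ≤ n := by exact_mod_cast hn
  have hφ : 0 < π / (2 * n) := by positivity
  have hφπ : π / (2 * n) < π := by
    rw [div_lt_iff₀ (by positivity)]
    nlinarith [pi_pos]
  have hsin : 0 < sin (π / (2 * n)) := sin_pos_of_pos_of_lt_pi hφ hφπ
  have hsin4 : sin (π / (2 * n)) ^ 4 ≤ 1 := pow_le_one₀ hsin.le (sin_le_one _)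
  constructor <;> nlinarith [pow_pos hsin 4]

theorem stmt9 (n : ℕ) (hn : 1 ≤ n) (t μ : ℝ)
    (ht : t = Real.sin (Real.pi / (2 * (n : ℝ)))) (hμ : μ = 1 - t ^ 4)
    (G H : Matrix (Fin 2) (Fin 2) ℝ)
    (hG : G = μ • P (Real.pi / (2 * (n : ℝ))))
    (hH : H = μ • R (Real.pi / (2 * (n : ℝ))))
    (A : ℕ → Matrix (Fin 2) (Fin 2) ℝ) (hA : ∀ k, A k = G ∨ A k = H) :
    (∀ k : ℕ, 1 ≤ k → opNorm (prods A k) ≤ μ ^ k * opNorm (P (Real.pi / (2 * (n : ℝ))))) ∧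
      Filter.Tendsto (fun k => opNorm (prods A k)) Filter.atTop (nhds 0) := by
  subst hG hH
  obtain ⟨hμ0, hμ1⟩ : μ ∈ Set.Ico 0 1 := hμ ▸ ht ▸ one_sub_sin_pow_four_mem_Ico hn
  have hbound := opNorm_prods_le hn hμ0 A hA
  refine ⟨fun k _ => hbound k, squeeze_zero (fun k => norm_nonneg _) hbound ?_⟩
  simpa using (tendsto_pow_atTop_nhds_zero_of_lt_one hμ0 hμ1).mul_const (opNorm (P (π / (2 * n))))
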